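/- Fix β ∈ (0,1], ξ ∈ (1/2, 1], σ_p, σ_S > 0 and λ > 0, and suppose (1−β)/β < σ_S²/σ_p². Define α₁(η) = 1 − βη − 2(1−η)(1−ξ) and α₂(η) = βη. Then there exists a finite time t* ∈ (0, ∞) such that, with η* = exp(−λt*), the zero-bias equation α₁(η*)·(1 − α₁(η*))·σ_p² = α₂(η*)²·σ_S² holds. -/

import Mathlib

/-!
Write `α₁(η) = (2ξ - 1)(1 - η) + (1 - β)η` and `1 - α₁(η) = 2(1 - ξ)(1 - η) + βη`. At `η = 1` the
gap `α₁(1 - α₁)σ_p² - (βη)²σ_S²` equals `β((1 - β)σ_p² - βσ_S²) < 0`, while for `η ∈ (0, 1]` it is at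
least `βη((2ξ - 1)(1 - η)σ_p² - βησ_S²)`, which is positive for small `η > 0`. The intermediate
value theorem gives a root `η* ∈ (0, 1)`, and `t* = -log η* / λ` is the zero-bias time.
-/

open Real Set

/-- `α₁(η)`, the coefficient of `p` in the election outcome. -/
def alphaOne (β ξ η : ℝ) : ℝ := 1 - β * η - 2 * (1 - η) * (1 - ξ)

/-- The election bias vanishes exactly at the zeros of this function of `η`. -/
def zeroBiasGap (β ξ σp σS η : ℝ) : ℝ :=
  alphaOne β ξ η * (1 - alphaOne β ξ η) * σp ^ 2 - (β * η) ^ 2 * σS ^ 2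

lemma continuous_zeroBiasGap (β ξ σp σS : ℝ) : Continuous (zeroBiasGap β ξ σp σS) := by
  unfold zeroBiasGap alphaOne
  fun_prop

lemma zeroBiasGap_one_neg {β σp σS : ℝ} (ξ : ℝ) (hβ : 0 < β) (hσp : 0 < σp)
    (h : (1 - β) / β < σS ^ 2 / σp ^ 2) : zeroBiasGap β ξ σp σS 1 < 0 := by
  have hvar : (1 - β) * σp ^ 2 < σS ^ 2 * β := (div_lt_div_iff₀ hβ (by positivity)).mp h
  have hgap : zeroBiasGap β ξ σp σS 1 = β * ((1 - β) * σp ^ 2 - β * σS ^ 2) := by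
    unfold zeroBiasGap alphaOne; ring
  rw [hgap]
  exact mul_neg_of_pos_of_neg hβ (by linarith)

lemma zeroBiasGap_pos {β ξ σp σS η : ℝ} (hβ : β ∈ Ioc (0 : ℝ) 1) (hξ : ξ ∈ Ioc (1 / 2 : ℝ) 1)
    (hη : η ∈ Ioc (0 : ℝ) 1) (hsmall : η * ((2 * ξ - 1) * σp ^ 2 + β * σS ^ 2) < (2 * ξ - 1) * σp ^ 2) :
    0 < zeroBiasGap β ξ σp σS η := by
  obtain ⟨hβ0, hβ1⟩ := hβ
  obtain ⟨hξ0, hξ1⟩ := hξ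
  obtain ⟨hη0, hη1⟩ := hη
  have hα : (2 * ξ - 1) * (1 - η) ≤ alphaOne β ξ η := by
    unfold alphaOne; nlinarith
  have hα' : β * η ≤ 1 - alphaOne β ξ η := by
    unfold alphaOne; nlinarith
  have hprod : (2 * ξ - 1) * (1 - η) * (β * η) ≤ alphaOne β ξ η * (1 - alphaOne β ξ η) :=
    mul_le_mul hα hα' (by positivity) (by nlinarith)
  have hlower : β * η * ((2 * ξ - 1) * (1 - η) * σp ^ 2 - β * η * σS ^ 2)
      ≤ zeroBiasGap β ξ σp σS η := by
    unfold zeroBiasGap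
    nlinarith [mul_le_mul_of_nonneg_right hprod (sq_nonneg σp)]
  exact lt_of_lt_of_le (mul_pos (mul_pos hβ0 hη0) (by nlinarith)) hlower

lemma exists_zeroBiasGap_eq_zero {β ξ σp σS : ℝ} (hβ : β ∈ Ioc (0 : ℝ) 1)
    (hξ : ξ ∈ Ioc (1 / 2 : ℝ) 1) (hσp : 0 < σp) (h : (1 - β) / β < σS ^ 2 / σp ^ 2) :
    ∃ η ∈ Ioo (0 : ℝ) 1, zeroBiasGap β ξ σp σS η = 0 := by
  set a := (2 * ξ - 1) * σp ^ 2
  set s := a + β * σS ^ 2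
  have ha : 0 < a := mul_pos (by linarith [hξ.1]) (by positivity)
  have has : a ≤ s := le_add_of_nonneg_right (by nlinarith [hβ.1])
  have hs : 0 < s := ha.trans_le has
  -- any `η₀ ∈ (0, a / s)` works
  set η₀ := a / (2 * s)
  have hη₀ : η₀ ∈ Ioc (0 : ℝ) 1 :=
    ⟨by positivity, (div_le_one (by positivity)).mpr (by linarith)⟩
  have hsmall : η₀ * s < a := by
    rw [div_mul_eq_mul_div, div_lt_iff₀ (by positivity)]
    nlinarith
  have hneg := zeroBiasGap_one_neg ξ hβ.1 hσp h
  obtain ⟨η, ⟨hη₀η, hη1⟩, hroot⟩ := intermediate_value_Icc' hη₀.2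
    (continuous_zeroBiasGap β ξ σp σS).continuousOn
    ⟨hneg.le, (zeroBiasGap_pos hβ hξ hη₀ hsmall).le⟩
  refine ⟨η, ⟨hη₀.1.trans_le hη₀η, hη1.lt_of_ne ?_⟩, hroot⟩
  rintro rfl
  exact hneg.ne hroot

lemma exists_pos_exp_neg_mul_eq {l η : ℝ} (hl : 0 < l) (hη : η ∈ Ioo (0 : ℝ) 1) :
    ∃ t : ℝ, 0 < t ∧ exp (-l * t) = η := by
  refine ⟨-log η / l, div_pos (neg_pos.mpr (log_neg hη.1 hη.2)) hl, ?_⟩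
  rw [neg_mul, mul_div_cancel₀ _ hl.ne', neg_neg, exp_log hη.1]


theorem exists_zero_bias_time_general
    (β ξ σp σS l : ℝ) (hβ : β ∈ Set.Ioc (0 : ℝ) 1) (hξ : ξ ∈ Set.Ioc (1/2 : ℝ) 1)
    (hσp : 0 < σp) (hl : 0 < l)
    (h : (1 - β) / β < σS ^ 2 / σp ^ 2) :
    ∃ t : ℝ, 0 < t ∧
      (1 - β * Real.exp (-l * t) - 2 * (1 - Real.exp (-l * t)) * (1 - ξ)) *
        (1 - (1 - β * Real.exp (-l * t) - 2 * (1 - Real.exp (-l * t)) * (1 - ξ))) *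
          σp ^ 2
        = (β * Real.exp (-l * t)) ^ 2 * σS ^ 2 := by
  obtain ⟨η, hη, hroot⟩ := exists_zeroBiasGap_eq_zero hβ hξ hσp h
  obtain ⟨t, ht, rfl⟩ := exists_pos_exp_neg_mul_eq hl hη
  exact ⟨t, ht, sub_eq_zero.mp hroot⟩

/-- Proposition 2 (existence of a finite zero-bias time): if `(1−β)/β < σ_S²/σ_p²`,
with election coefficients `α₁(η) = 1 − βη − 2(1−η)(1−ξ)` and `α₂(η) = βη` along
the critical-thinking path `η = exp(−λt)`, there exists a finite time
`t* ∈ (0,∞)` at which the zero-bias equation `α₁(1 − α₁)σ_p² = α₂²σ_S²` holds. -/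
theorem exists_zero_bias_time
    (β ξ σp σS l : ℝ) (hβ : β ∈ Set.Ioc (0 : ℝ) 1) (hξ : ξ ∈ Set.Ioc (1/2 : ℝ) 1)
    (hσp : 0 < σp) (hσS : 0 < σS) (hl : 0 < l)
    (h : (1 - β) / β < σS ^ 2 / σp ^ 2) :
    ∃ t : ℝ, 0 < t ∧
      (1 - β * Real.exp (-l * t) - 2 * (1 - Real.exp (-l * t)) * (1 - ξ)) *
        (1 - (1 - β * Real.exp (-l * t) - 2 * (1 - Real.exp (-l * t)) * (1 - ξ))) *
          σp ^ 2
        = (β * Real.exp (-l * t)) ^ 2 * σS ^ 2 :=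
  exists_zero_bias_time_general β ξ σp σS l hβ hξ hσp hl h
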